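/- With the setup of the difference operators Δ_u = T_u − I for commuting isometries T_u on a Banach space, one has the operator identity Δ_{2u}^n = 2^n Δ_u^n + ∑_{j=0}^{n} C(n,j) ∑_{i=0}^{j−1} T_{iu} Δ_u^{n+1}, where T_{iu} = (T_u)^i and C(n,j) is the binomial coefficient. Consequently, ω(n, ε) ≤ (n/2) ω(n+1, ε) + 2^{−n} ω(n, 2ε) for the modulus ω(n,ε) = sup_{0<|u|≤ε} ‖Δ_u^n x‖. -/

import Mathlib

/-!
Since `T (2u) = T u ^ 2`, everything happens inside the commutative ring generated by `a = T u`,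
where `a ^ 2 - 1 = (a + 1)(a - 1)` and the binomial theorem give
`(a + 1) ^ n - 2 ^ n = ∑ C(n,j) (a ^ j - 1) = ∑ C(n,j) ∑_{i<j} a ^ i (a - 1)`.
Applied to `x`, the operators `T (i u)` are contractions, so the double sum has norm at most
`∑ j C(n,j) ‖Δ_u^{n+1} x‖ = n 2^(n-1) ‖Δ_u^{n+1} x‖`; dividing the identity by `2 ^ n` and taking
suprema over `0 < ‖u‖ ≤ ε` (so that `0 < ‖2u‖ ≤ 2ε`) gives the inequality between the moduli.
-/

open Finset

theorem sum_choose_mul_pow_sub_one {R : Type*} [CommRing R] (a : R) (n : ℕ) :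
    ∑ j ∈ range (n + 1), (n.choose j : R) * (a ^ j - 1) = (a + 1) ^ n - 2 ^ n := by
  have two_pow : (2 : R) ^ n = ∑ j ∈ range (n + 1), (n.choose j : R) := by
    rw [← Nat.cast_sum, Nat.sum_range_choose, Nat.cast_pow, Nat.cast_ofNat]
  simp only [mul_sub, mul_one, sum_sub_distrib, add_pow, one_pow, mul_one, two_pow, mul_comm]

theorem sq_sub_one_pow_eq_of_comm {R : Type*} [CommRing R] (a : R) (n : ℕ) :
    (a ^ 2 - 1) ^ n = 2 ^ n * (a - 1) ^ n +
      ∑ j ∈ range (n + 1), (n.choose j : R) * ∑ i ∈ range j, a ^ i * (a - 1) ^ (n + 1) := by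
  have geom (j : ℕ) : ∑ i ∈ range j, a ^ i * (a - 1) ^ (n + 1) = (a ^ j - 1) * (a - 1) ^ n := by
    rw [← sum_mul, pow_succ', ← mul_assoc, geom_sum_mul]
  simp only [geom, ← mul_assoc, ← sum_mul, sum_choose_mul_pow_sub_one]
  rw [show a ^ 2 - 1 = (a + 1) * (a - 1) by ring, mul_pow]
  ring

theorem sq_sub_one_pow_eq {R : Type*} [Ring R] (a : R) (n : ℕ) :
    (a ^ 2 - 1) ^ n = 2 ^ n * (a - 1) ^ n +
      ∑ j ∈ range (n + 1), (n.choose j : R) * ∑ i ∈ range j, a ^ i * (a - 1) ^ (n + 1) := by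
  simpa [map_ofNat] using
    congrArg (Polynomial.aeval a) (sq_sub_one_pow_eq_of_comm (Polynomial.X : Polynomial ℤ) n)

theorem map_nsmul_eq_pow {E A : Type*} [AddMonoid E] [Monoid A] {T : E → A}
    (hadd : ∀ u v, T (u + v) = T u * T v) (h0 : T 0 = 1) (u : E) (k : ℕ) :
    T (k • u) = T u ^ k := by
  induction k with
  | zero => simpa using h0
  | succ k ih => rw [succ_nsmul, hadd, ih, pow_succ]

theorem sum_range_choose_mul_real (n : ℕ) :
    ∑ j ∈ range (n + 1), (n.choose j : ℝ) * j = n / 2 * 2 ^ n := by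
  have h := congrArg (Nat.cast (R := ℝ)) (Nat.sum_range_mul_choose n)
  push_cast at h
  rcases n with _ | n
  · simp
  · simp only [mul_comm (Nat.choose _ _ : ℝ), h, add_tsub_cancel_right, pow_succ]
    ring

theorem sub_one_pow_two_smul_eq {E A : Type*} [AddCommMonoid E] [Module ℝ E] [Ring A]
    [Algebra ℝ A] {T : E → A} (hadd : ∀ u v, T (u + v) = T u * T v) (h0 : T 0 = 1)
    (u : E) (n : ℕ) :
    (T ((2 : ℝ) • u) - 1) ^ n = (2 : ℝ) ^ n • (T u - 1) ^ n +
      ∑ j ∈ range (n + 1), (n.choose j : ℝ) •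
        ∑ i ∈ range j, T ((i : ℝ) • u) * (T u - 1) ^ (n + 1) := by
  have hpow (i : ℕ) : T ((i : ℝ) • u) = T u ^ i := by
    rw [Nat.cast_smul_eq_nsmul, map_nsmul_eq_pow hadd h0]
  have hsq : T ((2 : ℝ) • u) = T u ^ 2 := by exact_mod_cast hpow 2
  simp only [hsq, hpow, Algebra.smul_def, map_pow, map_ofNat, map_natCast]
  exact sq_sub_one_pow_eq (T u) n

section

variable {X : Type*} [SeminormedAddCommGroup X] [NormedSpace ℝ X]

theorem norm_sub_one_pow_apply_le {L : X →L[ℝ] X} (hL : ∀ y, ‖L y‖ ≤ ‖y‖) (k : ℕ) (y : X) :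
    ‖((L - 1) ^ k) y‖ ≤ 2 ^ k * ‖y‖ := by
  induction k generalizing y with
  | zero => simp
  | succ k ih =>
    calc ‖((L - 1) ^ (k + 1)) y‖ = ‖((L - 1) ^ k) (L y - y)‖ := by simp [pow_succ]
      _ ≤ 2 ^ k * ‖L y - y‖ := ih _
      _ ≤ 2 ^ k * (2 * ‖y‖) := by gcongr; linarith [norm_sub_le (L y) y, hL y]
      _ = 2 ^ (k + 1) * ‖y‖ := by ring

theorem norm_sum_mul_apply_le {ι : Type*} {L : ι → X →L[ℝ] X} (hL : ∀ i y, ‖L i y‖ ≤ ‖y‖)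
    (s : Finset ι) (B : X →L[ℝ] X) (y : X) :
    ‖(∑ i ∈ s, L i * B) y‖ ≤ s.card * ‖B y‖ := by
  rw [_root_.sum_apply]
  refine (norm_sum_le _ _).trans ?_
  simpa using sum_le_sum fun i _ => hL i (B y)

end

section

variable {E X : Type*} [SeminormedAddCommGroup E] [SeminormedAddCommGroup X] [NormedSpace ℝ X]
  {T : E → X →L[ℝ] X}

noncomputable def modulus (T : E → X →L[ℝ] X) (x : X) (n : ℕ) (ε : ℝ) : ℝ :=
  sSup {r : ℝ | ∃ u : E, 0 < ‖u‖ ∧ ‖u‖ ≤ ε ∧ r = ‖((T u - 1) ^ n) x‖}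

theorem modulus_nonneg (T : E → X →L[ℝ] X) (x : X) (n : ℕ) (ε : ℝ) : 0 ≤ modulus T x n ε :=
  Real.sSup_nonneg (by rintro r ⟨u, -, -, rfl⟩; positivity)

theorem le_modulus (hT : ∀ u y, ‖T u y‖ ≤ ‖y‖) (x : X) (n : ℕ) {ε : ℝ} {u : E}
    (hu : 0 < ‖u‖) (huε : ‖u‖ ≤ ε) : ‖((T u - 1) ^ n) x‖ ≤ modulus T x n ε :=
  le_csSup ⟨2 ^ n * ‖x‖, by
    rintro r ⟨v, -, -, rfl⟩; exact norm_sub_one_pow_apply_le (hT v) n x⟩ ⟨u, hu, huε, rfl⟩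

variable [NormedSpace ℝ E]

theorem norm_sub_one_pow_apply_le_add (hT : ∀ u y, ‖T u y‖ ≤ ‖y‖)
    (hadd : ∀ u v, T (u + v) = T u * T v) (h0 : T 0 = 1) (u : E) (n : ℕ) (x : X) :
    ‖((T u - 1) ^ n) x‖ ≤ (n : ℝ) / 2 * ‖((T u - 1) ^ (n + 1)) x‖
      + (2 : ℝ) ^ (-(n : ℤ)) * ‖((T ((2 : ℝ) • u) - 1) ^ n) x‖ := by
  set M := ‖((T u - 1) ^ (n + 1)) x‖
  set S := ∑ j ∈ range (n + 1), (n.choose j : ℝ) •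
    ∑ i ∈ range j, T ((i : ℝ) • u) * (T u - 1) ^ (n + 1)
  have hS : ‖S x‖ ≤ n / 2 * 2 ^ n * M := by
    calc ‖S x‖ ≤ ∑ j ∈ range (n + 1), (n.choose j : ℝ) * (j * M) := by
          rw [_root_.sum_apply]
          refine (norm_sum_le _ _).trans (sum_le_sum fun j _ => ?_)
          rw [smul_apply, norm_smul, Real.norm_natCast]
          gcongr
          simpa only [card_range] using
            norm_sum_mul_apply_le (fun i : ℕ => hT ((i : ℝ) • u)) (range j) _ x
      _ = n / 2 * 2 ^ n * M := by
          rw [← sum_range_choose_mul_real, sum_mul]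
          exact sum_congr rfl fun j _ => by ring
  have hsplit : (2 : ℝ) ^ n • ((T u - 1) ^ n) x = ((T ((2 : ℝ) • u) - 1) ^ n) x - S x := by
    rw [sub_one_pow_two_smul_eq hadd h0]
    simp [S]
  have h2n : (2 : ℝ) ^ n * ‖((T u - 1) ^ n) x‖
      ≤ ‖((T ((2 : ℝ) • u) - 1) ^ n) x‖ + n / 2 * 2 ^ n * M := by
    calc (2 : ℝ) ^ n * ‖((T u - 1) ^ n) x‖ = ‖(2 : ℝ) ^ n • ((T u - 1) ^ n) x‖ := by
          rw [norm_smul, norm_pow, Real.norm_ofNat]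
      _ ≤ _ := by rw [hsplit]; exact (norm_sub_le _ _).trans (by gcongr)
  rw [zpow_neg, zpow_natCast]
  calc ‖((T u - 1) ^ n) x‖ = ((2 : ℝ) ^ n)⁻¹ * (2 ^ n * ‖((T u - 1) ^ n) x‖) := by
        field_simp
    _ ≤ ((2 : ℝ) ^ n)⁻¹ * (‖((T ((2 : ℝ) • u) - 1) ^ n) x‖ + n / 2 * 2 ^ n * M) := by gcongr
    _ = _ := by field_simp; ring

theorem modulus_le_add (hT : ∀ u y, ‖T u y‖ ≤ ‖y‖)
    (hadd : ∀ u v, T (u + v) = T u * T v) (h0 : T 0 = 1) (x : X) (n : ℕ) (ε : ℝ) :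
    modulus T x n ε ≤ (n : ℝ) / 2 * modulus T x (n + 1) ε
      + (2 : ℝ) ^ (-(n : ℤ)) * modulus T x n (2 * ε) := by
  refine Real.sSup_le ?_ (add_nonneg (mul_nonneg (by positivity) (modulus_nonneg T x _ _))
    (mul_nonneg (by positivity) (modulus_nonneg T x _ _)))
  rintro r ⟨u, hu, huε, rfl⟩
  have h2u : ‖(2 : ℝ) • u‖ = 2 * ‖u‖ := by rw [norm_smul, Real.norm_ofNat]
  refine (norm_sub_one_pow_apply_le_add hT hadd h0 u n x).trans ?_
  gcongr
  · exact le_modulus hT x (n + 1) hu huε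
  · exact le_modulus hT x n (by rw [h2u]; positivity) (by linarith)

end

theorem stmt6_general (d : ℕ) (X : Type*) [NormedAddCommGroup X] [NormedSpace ℝ X]
    (T : EuclideanSpace ℝ (Fin d) → (X →L[ℝ] X))
    (hiso : ∀ u y, ‖T u y‖ = ‖y‖)
    (hadd : ∀ u v, T (u + v) = T u * T v)
    (h0 : T 0 = 1)
    (x : X) (n : ℕ) :
    (∀ u : EuclideanSpace ℝ (Fin d),
      (T ((2 : ℝ) • u) - 1) ^ n
        = (2 : ℝ) ^ n • (T u - 1) ^ n
          + ∑ j ∈ Finset.range (n + 1), (n.choose j : ℝ) •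
              ∑ i ∈ Finset.range j, T ((i : ℝ) • u) * (T u - 1) ^ (n + 1)) ∧
    (∀ ε : ℝ, 0 < ε →
      sSup {r : ℝ | ∃ u : EuclideanSpace ℝ (Fin d),
          0 < ‖u‖ ∧ ‖u‖ ≤ ε ∧ r = ‖((T u - 1) ^ n) x‖}
        ≤ ((n : ℝ) / 2) *
            sSup {r : ℝ | ∃ u : EuclideanSpace ℝ (Fin d),
              0 < ‖u‖ ∧ ‖u‖ ≤ ε ∧ r = ‖((T u - 1) ^ (n + 1)) x‖}
          + (2 : ℝ) ^ (-(n : ℤ)) *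
            sSup {r : ℝ | ∃ u : EuclideanSpace ℝ (Fin d),
              0 < ‖u‖ ∧ ‖u‖ ≤ 2 * ε ∧ r = ‖((T u - 1) ^ n) x‖}) :=
  ⟨fun u => sub_one_pow_two_smul_eq hadd h0 u n,
    fun ε _ => modulus_le_add (fun u y => (hiso u y).le) hadd h0 x n ε⟩

/-- the operator identity
Δ_{2u}^n = 2^n Δ_u^n + ∑_{j=0}^{n} C(n,j) ∑_{i=0}^{j−1} T_{iu} Δ_u^{n+1},
for commuting isometries T with T_{u+v} = T_u T_v, T_0 = I, Δ_u = T_u − I; and consequently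
ω(n, ε) ≤ (n/2) ω(n+1, ε) + 2^{−n} ω(n, 2ε), where ω(n,ε) = sup_{0<|u|≤ε} ‖Δ_u^n x‖. -/
theorem stmt6 (d : ℕ) (X : Type*) [NormedAddCommGroup X] [NormedSpace ℝ X]
    (T : EuclideanSpace ℝ (Fin d) → (X →L[ℝ] X))
    (hiso : ∀ u y, ‖T u y‖ = ‖y‖)
    (hadd : ∀ u v, T (u + v) = T u * T v)
    (h0 : T 0 = 1)
    (x : X) (n : ℕ) (hn : 0 < n) :
    (∀ u : EuclideanSpace ℝ (Fin d),
      (T ((2 : ℝ) • u) - 1) ^ n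
        = (2 : ℝ) ^ n • (T u - 1) ^ n
          + ∑ j ∈ Finset.range (n + 1), (n.choose j : ℝ) •
              ∑ i ∈ Finset.range j, T ((i : ℝ) • u) * (T u - 1) ^ (n + 1)) ∧
    (∀ ε : ℝ, 0 < ε →
      sSup {r : ℝ | ∃ u : EuclideanSpace ℝ (Fin d),
          0 < ‖u‖ ∧ ‖u‖ ≤ ε ∧ r = ‖((T u - 1) ^ n) x‖}
        ≤ ((n : ℝ) / 2) *
            sSup {r : ℝ | ∃ u : EuclideanSpace ℝ (Fin d),
              0 < ‖u‖ ∧ ‖u‖ ≤ ε ∧ r = ‖((T u - 1) ^ (n + 1)) x‖}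
          + (2 : ℝ) ^ (-(n : ℤ)) *
            sSup {r : ℝ | ∃ u : EuclideanSpace ℝ (Fin d),
              0 < ‖u‖ ∧ ‖u‖ ≤ 2 * ε ∧ r = ‖((T u - 1) ^ n) x‖}) :=
  stmt6_general d X T hiso hadd h0 x n
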